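/- arXiv:1409.6330 — 3 statements merged into one kernel-verified Lean document; each statement's English description precedes it below -/
import Mathlib

section
/- Let A be an integral domain that is a finitely generated k-algebra of Krull dimension 1, is integrally closed in its fraction field Frac(A), satisfies that every unit of A is the image of a nonzero element of k, and is such that Frac(A) is k-algebra isomorphic to the rational function field k(t) in one variable. Then A is k-algebra isomorphic to the polynomial ring k[t] in one variable. -/
/-!
Over an algebraically closed field `k`, every valuation subring `V ≠ k(X)` of `k(X)` containing
`k` is the local ring of a point of `ℙ¹`: if `X ∈ V`, the denominator of any `y ∉ V` factors into
linear factors, one of which, `X - a`, lies in the maximal ideal, and then `V` is the local ring at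
`a`; if `X ∉ V`, the valuation of a polynomial is that of `X` raised to its degree, and `V` is the
local ring at `∞`.

An integrally closed `R ⊆ k(X)` is the intersection of the valuation subrings containing it, so it
is the ring of functions regular away from the points of `ℙ¹` at which some element of `R` has a
pole. If there were two such points `a, b`, then `(X - a) / (X - b)` (or `X - a` if `b = ∞`) would
be a nonconstant unit of `R`; if there were none, `R` would be `k`. Hence there is exactly one, and
`R = k[X]` or `R = k[1 / (X - a)]`.
-/

open Polynomial
open scoped RatFunc

namespace Valuation

variable {k L Γ₀ : Type*} [Field k] [Field L] [Algebra k L] [LinearOrderedCommGroupWithZero Γ₀]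
  {v : Valuation L Γ₀}

theorem map_aeval_le_one (hk : ∀ c : k, c ≠ 0 → v (algebraMap k L c) = 1) {w : L} (hw : v w ≤ 1)
    (q : k[X]) : v (aeval w q) ≤ 1 := by
  rw [aeval_eq_sum_range]
  refine v.map_sum_le fun i _ => ?_
  rw [Algebra.smul_def, map_mul, map_pow]
  refine mul_le_one' ?_ (pow_le_one' hw _)
  rcases eq_or_ne (q.coeff i) 0 with h | h
  · simp [h]
  · exact (hk _ h).le

theorem map_aeval_eq_pow_natDegree (hk : ∀ c : k, c ≠ 0 → v (algebraMap k L c) = 1) {w : L}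
    (hw : 1 < v w) {q : k[X]} (hq : q ≠ 0) : v (aeval w q) = v w ^ q.natDegree := by
  classical
  have hterm (i : ℕ) (hi : q.coeff i ≠ 0) : v (q.coeff i • w ^ i) = v w ^ i := by
    rw [Algebra.smul_def, map_mul, map_pow, hk _ hi, one_mul]
  rw [aeval_eq_sum_range, v.map_sum_eq_of_lt (j := q.natDegree) (by simp),
    hterm _ (leadingCoeff_ne_zero.mpr hq)]
  intro i hi
  rw [Finset.mem_sdiff, Finset.mem_range, Finset.mem_singleton] at hi
  rw [hterm _ (leadingCoeff_ne_zero.mpr hq)]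
  rcases eq_or_ne (q.coeff i) 0 with hci | hci
  · rw [hci, zero_smul, map_zero]
    exact pow_pos (zero_lt_one.trans hw) _
  · rw [hterm i hci]
    exact pow_lt_pow_right₀ hw (by omega)

end Valuation

section Regularity

variable {k : Type*} [Field k]

def RatFunc.IsRegularAt (a : k) (y : k⟮X⟯) : Prop :=
  ∃ p q : k[X], q.eval a ≠ 0 ∧ y = algebraMap k[X] k⟮X⟯ p / algebraMap k[X] k⟮X⟯ q

def RatFunc.IsRegularAtInfty (y : k⟮X⟯) : Prop :=
  ∃ p q : k[X], q ≠ 0 ∧ p.natDegree ≤ q.natDegree ∧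
    y = algebraMap k[X] k⟮X⟯ p / algebraMap k[X] k⟮X⟯ q

theorem RatFunc.isRegularAt_algebraMap (c : k) (p : k[X]) :
    RatFunc.IsRegularAt c (algebraMap k[X] k⟮X⟯ p) :=
  ⟨p, 1, by simp, by simp⟩

theorem RatFunc.isRegularAt_div_X_sub_C (p : k[X]) {b c : k} (hcb : c ≠ b) :
    RatFunc.IsRegularAt c
      (algebraMap k[X] k⟮X⟯ p / algebraMap k[X] k⟮X⟯ (Polynomial.X - Polynomial.C b)) :=
  ⟨p, _, by simpa [sub_eq_zero] using hcb, rfl⟩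

theorem RatFunc.isRegularAtInfty_div_X_sub_C {p : k[X]} (hp : p.natDegree ≤ 1) (b : k) :
    RatFunc.IsRegularAtInfty
      (algebraMap k[X] k⟮X⟯ p / algebraMap k[X] k⟮X⟯ (Polynomial.X - Polynomial.C b)) :=
  ⟨p, _, X_sub_C_ne_zero b, by rwa [natDegree_X_sub_C], rfl⟩

theorem RatFunc.IsRegularAt.denom_eval_ne_zero {a : k} {y : k⟮X⟯}
    (hy : RatFunc.IsRegularAt a y) : y.denom.eval a ≠ 0 := by
  obtain ⟨p, q, hq, rfl⟩ := hy
  obtain ⟨s, hs⟩ := RatFunc.denom_div_dvd p q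
  intro h
  rw [hs, Polynomial.eval_mul, h, zero_mul] at hq
  exact hq rfl

theorem RatFunc.IsRegularAtInfty.natDegree_num_le {y : k⟮X⟯} (hy : RatFunc.IsRegularAtInfty y) :
    y.num.natDegree ≤ y.denom.natDegree := by
  obtain ⟨p, q, hq, hpq, rfl⟩ := hy
  rcases eq_or_ne p 0 with rfl | hp
  · simp
  have h := RatFunc.intDegree_div (RatFunc.algebraMap_ne_zero hp) (RatFunc.algebraMap_ne_zero hq)
  rw [RatFunc.intDegree_polynomial, RatFunc.intDegree_polynomial] at h
  have h' : (algebraMap k[X] k⟮X⟯ p / algebraMap k[X] k⟮X⟯ q).intDegree =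
      ((algebraMap k[X] k⟮X⟯ p / algebraMap k[X] k⟮X⟯ q).num.natDegree : ℤ) -
        (algebraMap k[X] k⟮X⟯ p / algebraMap k[X] k⟮X⟯ q).denom.natDegree := rfl
  omega

theorem RatFunc.X_sub_C_notMem_bot (a : k) :
    algebraMap k[X] k⟮X⟯ (Polynomial.X - Polynomial.C a) ∉ (⊥ : Subalgebra k k⟮X⟯) := by
  rw [Algebra.mem_bot]
  rintro ⟨c, hc⟩
  rw [RatFunc.algebraMap_eq_C, ← RatFunc.algebraMap_C] at hc
  have := congrArg natDegree (RatFunc.algebraMap_injective k hc)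
  simp at this

theorem RatFunc.X_sub_C_div_X_sub_C_notMem_bot {a b : k} (hab : a ≠ b) :
    algebraMap k[X] k⟮X⟯ (Polynomial.X - Polynomial.C a) /
      algebraMap k[X] k⟮X⟯ (Polynomial.X - Polynomial.C b) ∉ (⊥ : Subalgebra k k⟮X⟯) := by
  rw [Algebra.mem_bot]
  rintro ⟨c, hc⟩
  rw [eq_div_iff (RatFunc.algebraMap_ne_zero (X_sub_C_ne_zero b)), RatFunc.algebraMap_eq_C,
    ← RatFunc.algebraMap_C, ← map_mul] at hc
  have := congrArg (Polynomial.eval b) (RatFunc.algebraMap_injective k hc)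
  simp only [Polynomial.eval_mul, Polynomial.eval_C, Polynomial.eval_sub, Polynomial.eval_X,
    sub_self, mul_zero] at this
  exact hab (sub_eq_zero.mp this.symm).symm

theorem RatFunc.transcendental_inv_X_sub_C (a : k) :
    Transcendental k (algebraMap k[X] k⟮X⟯ (Polynomial.X - Polynomial.C a))⁻¹ := by
  rw [Transcendental, IsAlgebraic.inv_iff, ← Transcendental,
    transcendental_algebraMap_iff (RatFunc.algebraMap_injective k)]
  exact (Polynomial.X - Polynomial.C a).transcendental
    (by rw [natDegree_X_sub_C]; exact one_ne_zero) (by rw [leadingCoeff_X_sub_C]; exact one_mem _)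

theorem RatFunc.div_X_sub_C_pow_mem_adjoin (a : k) {p : k[X]} {e : ℕ} (hp : p.natDegree ≤ e) :
    algebraMap k[X] k⟮X⟯ p / algebraMap k[X] k⟮X⟯ (Polynomial.X - Polynomial.C a) ^ e ∈
      Algebra.adjoin k {(algebraMap k[X] k⟮X⟯ (Polynomial.X - Polynomial.C a))⁻¹} := by
  set w := algebraMap k[X] k⟮X⟯ (Polynomial.X - Polynomial.C a) with hw_def
  induction e generalizing p with
  | zero =>
    rw [pow_zero, div_one, eq_C_of_natDegree_le_zero hp, RatFunc.algebraMap_C,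
      ← RatFunc.algebraMap_eq_C]
    exact Subalgebra.algebraMap_mem _ _
  | succ e ih =>
    have hw : w ≠ 0 := RatFunc.algebraMap_ne_zero (X_sub_C_ne_zero a)
    have hsplit := modByMonic_add_div p (Polynomial.X - Polynomial.C a)
    rw [modByMonic_X_sub_C_eq_C_eval] at hsplit
    have hdeg : (p /ₘ (Polynomial.X - Polynomial.C a)).natDegree ≤ e := by
      rw [natDegree_divByMonic _ (monic_X_sub_C a), natDegree_X_sub_C]; omega
    have hexp : algebraMap k[X] k⟮X⟯ p / w ^ (e + 1) =
        algebraMap k k⟮X⟯ (p.eval a) * w⁻¹ ^ (e + 1) +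
          algebraMap k[X] k⟮X⟯ (p /ₘ (Polynomial.X - Polynomial.C a)) / w ^ e := by
      conv_lhs => rw [← hsplit]
      rw [map_add, map_mul, RatFunc.algebraMap_C, ← RatFunc.algebraMap_eq_C, ← hw_def, inv_pow]
      field_simp
      ring
    rw [hexp]
    exact add_mem (mul_mem (Subalgebra.algebraMap_mem _ _)
      (pow_mem (Algebra.self_mem_adjoin_singleton k _) _)) (ih hdeg)

variable [IsAlgClosed k]

theorem RatFunc.denom_eq_one_of_forall_isRegularAt {y : k⟮X⟯}
    (hy : ∀ a, RatFunc.IsRegularAt a y) : y.denom = 1 := by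
  rw [← Polynomial.Monic.natDegree_eq_zero (RatFunc.monic_denom y)]
  by_contra h
  obtain ⟨a, ha⟩ := IsAlgClosed.exists_root y.denom
    (by rwa [degree_eq_natDegree y.denom_ne_zero, Nat.cast_ne_zero])
  exact (hy a).denom_eval_ne_zero ha

theorem RatFunc.denom_eq_X_sub_C_pow {a : k} {y : k⟮X⟯}
    (hy : ∀ b, b ≠ a → RatFunc.IsRegularAt b y) :
    y.denom = (Polynomial.X - Polynomial.C a) ^ y.denom.natDegree := by
  have hroots : y.denom.roots = Multiset.replicate y.denom.natDegree a := by
    rw [Multiset.eq_replicate, ← splits_iff_card_roots.mp (IsAlgClosed.splits _)]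
    exact ⟨rfl, fun b hb => by_contra fun hba =>
      (hy b hba).denom_eval_ne_zero (isRoot_of_mem_roots hb)⟩
  conv_lhs =>
    rw [(IsAlgClosed.splits y.denom).eq_prod_roots_of_monic (RatFunc.monic_denom y), hroots]
  simp

theorem RatFunc.mem_bot_of_forall_isRegularAt {y : k⟮X⟯}
    (hy : ∀ a, RatFunc.IsRegularAt a y) (hinf : RatFunc.IsRegularAtInfty y) :
    y ∈ (⊥ : Subalgebra k k⟮X⟯) := by
  have hden := RatFunc.denom_eq_one_of_forall_isRegularAt hy
  have hnum := hinf.natDegree_num_le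
  rw [hden, natDegree_one] at hnum
  rw [← RatFunc.num_div_denom y, hden, map_one, div_one, eq_C_of_natDegree_le_zero hnum,
    RatFunc.algebraMap_C, ← RatFunc.algebraMap_eq_C]
  exact Subalgebra.algebraMap_mem _ _

theorem RatFunc.mem_adjoin_X_of_forall_isRegularAt {y : k⟮X⟯}
    (hy : ∀ a, RatFunc.IsRegularAt a y) : y ∈ Algebra.adjoin k {(RatFunc.X : k⟮X⟯)} := by
  rw [← RatFunc.num_div_denom y, RatFunc.denom_eq_one_of_forall_isRegularAt hy, map_one, div_one,
    ← RatFunc.aeval_X_left_eq_algebraMap]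
  exact aeval_mem_adjoin_singleton k _

theorem RatFunc.mem_adjoin_inv_X_sub_C {a : k} {y : k⟮X⟯}
    (hfin : ∀ b, b ≠ a → RatFunc.IsRegularAt b y) (hinf : RatFunc.IsRegularAtInfty y) :
    y ∈ Algebra.adjoin k {(algebraMap k[X] k⟮X⟯ (Polynomial.X - Polynomial.C a))⁻¹} := by
  have hnum := hinf.natDegree_num_le
  rw [← RatFunc.num_div_denom y, RatFunc.denom_eq_X_sub_C_pow hfin, map_pow]
  exact RatFunc.div_X_sub_C_pow_mem_adjoin a hnum

end Regularity

section Places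

variable {k Γ₀ : Type*} [Field k] [LinearOrderedCommGroupWithZero Γ₀] {v : Valuation k⟮X⟯ Γ₀}

theorem Valuation.le_one_iff_isRegularAt (hk : ∀ c : k, c ≠ 0 → v (algebraMap k k⟮X⟯ c) = 1)
    (hX : v (RatFunc.X : k⟮X⟯) ≤ 1) {a : k} (ha : v (algebraMap k[X] k⟮X⟯ (X - C a)) < 1)
    (y : k⟮X⟯) : v y ≤ 1 ↔ RatFunc.IsRegularAt a y := by
  have hpoly (p : k[X]) : v (algebraMap k[X] k⟮X⟯ p) ≤ 1 := by
    rw [← RatFunc.aeval_X_left_eq_algebraMap]; exact v.map_aeval_le_one hk hX p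
  have hroot {p : k[X]} (hp : p.IsRoot a) : v (algebraMap k[X] k⟮X⟯ p) < 1 := by
    obtain ⟨s, rfl⟩ := dvd_iff_isRoot.mpr hp
    rw [map_mul, map_mul]
    exact mul_lt_one_of_lt_of_le ha (hpoly s)
  have hunit {q : k[X]} (hq : q.eval a ≠ 0) : v (algebraMap k[X] k⟮X⟯ q) = 1 := by
    have hC : v (algebraMap k[X] k⟮X⟯ (C (q.eval a))) = 1 := by
      rw [RatFunc.algebraMap_C, ← RatFunc.algebraMap_eq_C, hk _ hq]
    rw [← add_sub_cancel (C (q.eval a)) q, map_add,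
      v.map_add_eq_of_lt_left (hC ▸ hroot (by simp)), hC]
  constructor
  · intro hy
    refine ⟨y.num, y.denom, fun hden => ?_, (RatFunc.num_div_denom y).symm⟩
    have hnum : y.num.eval a ≠ 0 := fun hnum => by
      have := (RatFunc.isCoprime_num_denom y).map (evalRingHom a)
      simp [hnum, hden] at this
    rw [← RatFunc.num_div_denom y, map_div₀, hunit hnum,
      div_le_one₀ (v.pos_iff.mpr (RatFunc.algebraMap_ne_zero y.denom_ne_zero))] at hy
    exact (hroot hden).not_ge hy
  · rintro ⟨p, q, hq, rfl⟩
    rw [map_div₀, hunit hq, div_one]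
    exact hpoly p

theorem Valuation.le_one_iff_isRegularAtInfty
    (hk : ∀ c : k, c ≠ 0 → v (algebraMap k k⟮X⟯ c) = 1) (hX : 1 < v (RatFunc.X : k⟮X⟯))
    (y : k⟮X⟯) : v y ≤ 1 ↔ RatFunc.IsRegularAtInfty y := by
  have hfrac {p q : k[X]} (hq : q ≠ 0) :
      v (algebraMap k[X] k⟮X⟯ p / algebraMap k[X] k⟮X⟯ q) ≤ 1 ↔
        p = 0 ∨ p.natDegree ≤ q.natDegree := by
    rcases eq_or_ne p 0 with rfl | hp
    · simp
    have hdeg {r : k[X]} (hr : r ≠ 0) :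
        v (algebraMap k[X] k⟮X⟯ r) = v RatFunc.X ^ r.natDegree := by
      rw [← RatFunc.aeval_X_left_eq_algebraMap]; exact v.map_aeval_eq_pow_natDegree hk hX hr
    rw [map_div₀, div_le_one₀ (v.pos_iff.mpr (RatFunc.algebraMap_ne_zero hq)), hdeg hp, hdeg hq,
      pow_le_pow_iff_right₀ hX, or_iff_right hp]
  constructor
  · intro hy
    refine ⟨y.num, y.denom, y.denom_ne_zero, ?_, (RatFunc.num_div_denom y).symm⟩
    rw [← RatFunc.num_div_denom y, hfrac y.denom_ne_zero] at hy
    rcases hy with h | h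
    · simp [h]
    · exact h
  · rintro ⟨p, q, hq, hpq, rfl⟩
    exact (hfrac hq).mpr (.inr hpq)

theorem Valuation.exists_lt_one_X_sub_C [IsAlgClosed k]
    (hk : ∀ c : k, c ≠ 0 → v (algebraMap k k⟮X⟯ c) = 1) (hX : v (RatFunc.X : k⟮X⟯) ≤ 1)
    {y : k⟮X⟯} (hy : 1 < v y) : ∃ a : k, v (algebraMap k[X] k⟮X⟯ (X - C a)) < 1 := by
  have hpoly (p : k[X]) : v (algebraMap k[X] k⟮X⟯ p) ≤ 1 := by
    rw [← RatFunc.aeval_X_left_eq_algebraMap]; exact v.map_aeval_le_one hk hX p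
  have hden : v (algebraMap k[X] k⟮X⟯ y.denom) < 1 := by
    refine (hpoly _).lt_of_ne fun h => hy.not_ge ?_
    rw [← RatFunc.num_div_denom y, map_div₀, h, div_one]
    exact hpoly _
  by_contra! hge
  refine hden.ne ?_
  rw [(IsAlgClosed.splits y.denom).eq_prod_roots_of_monic (RatFunc.monic_denom y),
    map_multiset_prod, map_multiset_prod, Multiset.map_map, Multiset.map_map]
  exact Multiset.prod_eq_one fun _ hx => by
    obtain ⟨a, -, rfl⟩ := Multiset.mem_map.mp hx
    exact le_antisymm (hpoly _) (hge a)

theorem ValuationSubring.mem_iff_isRegularAt_or_mem_iff_isRegularAtInfty [IsAlgClosed k]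
    (V : ValuationSubring k⟮X⟯) (hk : ∀ c : k, algebraMap k k⟮X⟯ c ∈ V) (hV : V ≠ ⊤) :
    (∃ a : k, ∀ y, y ∈ V ↔ RatFunc.IsRegularAt a y) ∨ ∀ y, y ∈ V ↔ RatFunc.IsRegularAtInfty y := by
  have hk' (c : k) (hc : c ≠ 0) : V.valuation (algebraMap k k⟮X⟯ c) = 1 := by
    have h1 := (V.valuation_le_one_iff _).mpr (hk c)
    have h2 := (V.valuation_le_one_iff _).mpr (hk c⁻¹)
    rw [map_inv₀, map_inv₀, inv_le_one₀ (V.valuation.pos_iff.mpr (by simpa using hc))] at h2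
    exact le_antisymm h1 h2
  obtain ⟨y, hy⟩ : ∃ y, y ∉ V := by
    by_contra! h
    exact hV (top_unique fun y _ => h y)
  rw [← V.valuation_le_one_iff, not_le] at hy
  by_cases hX : V.valuation RatFunc.X ≤ 1
  · obtain ⟨a, ha⟩ := V.valuation.exists_lt_one_X_sub_C hk' hX hy
    exact .inl ⟨a, fun z => (V.valuation_le_one_iff z).symm.trans
      (V.valuation.le_one_iff_isRegularAt hk' hX ha z)⟩
  · exact .inr fun z => (V.valuation_le_one_iff z).symm.trans
      (V.valuation.le_one_iff_isRegularAtInfty hk' (not_le.mp hX) z)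

end Places

section IntegrallyClosed

variable {k : Type*} [Field k] [IsAlgClosed k] (R : Subalgebra k k⟮X⟯)
  [IsIntegrallyClosedIn R k⟮X⟯]

theorem Subalgebra.mem_of_forall_isRegularAt {x : k⟮X⟯}
    (hfin : ∀ a, (∀ r ∈ R, RatFunc.IsRegularAt a r) → RatFunc.IsRegularAt a x)
    (hinf : (∀ r ∈ R, RatFunc.IsRegularAtInfty r) → RatFunc.IsRegularAtInfty x) : x ∈ R := by
  by_contra hx
  have : IsIntegrallyClosedIn R.toSubring k⟮X⟯ := ‹_›
  obtain ⟨V, hRV, hxV⟩ :=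
    Subring.exists_le_valuationSubring_of_isIntegrallyClosedIn (R := R.toSubring) hx
  rcases V.mem_iff_isRegularAt_or_mem_iff_isRegularAtInfty (fun c => hRV (R.algebraMap_mem c))
    (fun h => hxV (h ▸ ValuationSubring.mem_top x)) with ⟨a, ha⟩ | h
  · exact hxV ((ha x).2 (hfin a fun r hr => (ha r).1 (hRV hr)))
  · exact hxV ((h x).2 (hinf fun r hr => (h r).1 (hRV hr)))

theorem Subalgebra.inv_X_sub_C_mem {a : k} (ha : ¬∀ r ∈ R, RatFunc.IsRegularAt a r) :
    (algebraMap k[X] k⟮X⟯ (X - C a))⁻¹ ∈ R := by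
  rw [← one_div, ← map_one (algebraMap k[X] k⟮X⟯)]
  refine R.mem_of_forall_isRegularAt (fun c hc => ?_) fun _ =>
    RatFunc.isRegularAtInfty_div_X_sub_C (by simp) a
  exact RatFunc.isRegularAt_div_X_sub_C _ fun hca => ha (hca ▸ hc)

theorem Subalgebra.forall_isRegularAt_of_ne
    (hunits : ∀ u ∈ R, u⁻¹ ∈ R → u ∈ (⊥ : Subalgebra k k⟮X⟯)) {a b : k} (hab : a ≠ b)
    (ha : ¬∀ r ∈ R, RatFunc.IsRegularAt a r) : ∀ r ∈ R, RatFunc.IsRegularAt b r := by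
  by_contra hb
  refine RatFunc.X_sub_C_div_X_sub_C_notMem_bot hab (hunits _ ?_ ?_)
  · refine R.mem_of_forall_isRegularAt (fun c hc => ?_) fun _ =>
      RatFunc.isRegularAtInfty_div_X_sub_C (natDegree_X_sub_C a).le b
    exact RatFunc.isRegularAt_div_X_sub_C _ fun hcb => hb (hcb ▸ hc)
  · rw [inv_div]
    refine R.mem_of_forall_isRegularAt (fun c hc => ?_) fun _ =>
      RatFunc.isRegularAtInfty_div_X_sub_C (natDegree_X_sub_C b).le a
    exact RatFunc.isRegularAt_div_X_sub_C _ fun hca => ha (hca ▸ hc)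

theorem Subalgebra.forall_isRegularAtInfty
    (hunits : ∀ u ∈ R, u⁻¹ ∈ R → u ∈ (⊥ : Subalgebra k k⟮X⟯)) {a : k}
    (ha : ¬∀ r ∈ R, RatFunc.IsRegularAt a r) : ∀ r ∈ R, RatFunc.IsRegularAtInfty r := by
  by_contra hinf
  refine RatFunc.X_sub_C_notMem_bot a (hunits _ ?_ (R.inv_X_sub_C_mem ha))
  exact R.mem_of_forall_isRegularAt (fun c _ => RatFunc.isRegularAt_algebraMap c _)
    fun h => (hinf h).elim

theorem Subalgebra.exists_transcendental_adjoin_eq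
    (hunits : ∀ u ∈ R, u⁻¹ ∈ R → u ∈ (⊥ : Subalgebra k k⟮X⟯)) (hR : R ≠ ⊥) :
    ∃ g : k⟮X⟯, Transcendental k g ∧ Algebra.adjoin k {g} = R := by
  by_cases hfin : ∀ a, ∀ r ∈ R, RatFunc.IsRegularAt a r
  · have hX : RatFunc.X ∈ R := by
      refine R.mem_of_forall_isRegularAt (fun a _ => ?_) fun hinf => (hR ?_).elim
      · rw [← RatFunc.algebraMap_X]; exact RatFunc.isRegularAt_algebraMap a _
      · exact eq_bot_iff.mpr fun r hr =>
          RatFunc.mem_bot_of_forall_isRegularAt (hfin · r hr) (hinf r hr)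
    exact ⟨RatFunc.X, RatFunc.transcendental_X,
      le_antisymm (Algebra.adjoin_le_iff.mpr (by simpa))
        fun r hr => RatFunc.mem_adjoin_X_of_forall_isRegularAt (hfin · r hr)⟩
  · obtain ⟨a, ha⟩ := not_forall.mp hfin
    refine ⟨_, RatFunc.transcendental_inv_X_sub_C a,
      le_antisymm (Algebra.adjoin_le_iff.mpr (by simpa using R.inv_X_sub_C_mem ha))
        fun r hr => ?_⟩
    exact RatFunc.mem_adjoin_inv_X_sub_C
      (fun b hb => R.forall_isRegularAt_of_ne hunits hb.symm ha r hr)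
      (R.forall_isRegularAtInfty hunits ha r hr)

end IntegrallyClosed

theorem isIntegrallyClosedIn_range_toAlgHom (R A K : Type*) [CommRing R] [CommRing A]
    [CommRing K] [Algebra R A] [Algebra R K] [Algebra A K] [IsScalarTower R A K]
    [IsIntegrallyClosedIn A K] : IsIntegrallyClosedIn (IsScalarTower.toAlgHom R A K).range K := by
  set f := IsScalarTower.toAlgHom R A K
  let _ : Algebra A f.range := f.rangeRestrict.toRingHom.toAlgebra
  have : IsScalarTower A f.range K := .of_algebraMap_eq fun _ => rfl
  have : Algebra.IsIntegral A f.range :=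
    Algebra.isIntegral_of_surjective f.rangeRestrict_surjective
  refine Subring.isIntegrallyClosedIn_iff.mpr fun x hx => ?_
  obtain ⟨a, rfl⟩ := IsIntegrallyClosedIn.isIntegral_iff.mp (isIntegral_trans (R := A) x hx)
  exact ⟨a, rfl⟩

theorem nonempty_algEquiv_polynomial_of_isFractionRing {k : Type*} [Field k] [IsAlgClosed k]
    (A : Type*) [CommRing A] [Algebra k A] [Algebra A k⟮X⟯] [IsScalarTower k A k⟮X⟯]
    [IsFractionRing A k⟮X⟯] [IsIntegrallyClosed A]
    (hunits : ∀ u : Aˣ, ∃ c : k, algebraMap k A c = u) : Nonempty (A ≃ₐ[k] k[X]) := by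
  set R := (IsScalarTower.toAlgHom k A k⟮X⟯).range
  have : IsIntegrallyClosedIn A k⟮X⟯ := (isIntegrallyClosed_iff_isIntegrallyClosedIn _).mp ‹_›
  have := isIntegrallyClosedIn_range_toAlgHom k A k⟮X⟯
  have hunitsR : ∀ u ∈ R, u⁻¹ ∈ R → u ∈ (⊥ : Subalgebra k k⟮X⟯) := by
    rintro _ ⟨b, rfl⟩ ⟨b', hb'⟩
    rcases eq_or_ne (algebraMap A k⟮X⟯ b) 0 with h0 | h0
    · exact h0 ▸ zero_mem _
    have hbb' : b * b' = 1 := IsFractionRing.injective A k⟮X⟯ <| by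
      rw [map_mul, map_one]; exact (congrArg _ hb').trans (mul_inv_cancel₀ h0)
    obtain ⟨c, hc⟩ := hunits (Units.mkOfMulEqOne b b' hbb')
    rw [Units.val_mkOfMulEqOne] at hc
    exact Algebra.mem_bot.mpr ⟨c, by rw [IsScalarTower.algebraMap_apply k A k⟮X⟯, hc]; rfl⟩
  have hR : R ≠ ⊥ := fun h => by
    have hconst (x : A) : algebraMap A k⟮X⟯ x ∈ Set.range (algebraMap k k⟮X⟯) :=
      Algebra.mem_bot.mp (h ▸ ⟨x, rfl⟩)
    obtain ⟨a, b, -, hab⟩ := IsFractionRing.div_surjective (A := A) (RatFunc.X : k⟮X⟯)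
    obtain ⟨c, hc⟩ := hconst a
    obtain ⟨d, hd⟩ := hconst b
    apply RatFunc.transcendental_X (K := k)
    rw [← hab, ← hc, ← hd, ← map_div₀]
    exact isAlgebraic_algebraMap _
  obtain ⟨g, hg, hgR⟩ := R.exists_transcendental_adjoin_eq hunitsR hR
  exact ⟨(AlgEquiv.ofInjective _ (IsFractionRing.injective A k⟮X⟯)).trans
    ((Subalgebra.equivOfEq _ _ hgR.symm).trans (algEquivOfTranscendental k g hg).symm)⟩

theorem normal_rational_affine_curve_with_constant_units_is_affine_line_general
    (k A : Type) [Field k] [IsAlgClosed k]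
    [CommRing A] [Algebra k A]
    [IsIntegrallyClosed A]
    (hunits : ∀ u : Aˣ, ∃ c : k, c ≠ 0 ∧ algebraMap k A c = ↑u)
    (hrat : Nonempty (FractionRing A ≃ₐ[k] FractionRing (Polynomial k))) :
    Nonempty (A ≃ₐ[k] Polynomial k) := by
  obtain ⟨φ⟩ := hrat
  let e : FractionRing A ≃ₐ[k] k⟮X⟯ :=
    φ.trans ((FractionRing.algEquiv k[X] k⟮X⟯).restrictScalars k)
  let _ : Algebra A k⟮X⟯ := (e.toRingHom.comp (algebraMap A (FractionRing A))).toAlgebra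
  have : IsScalarTower k A k⟮X⟯ := .of_algebraMap_eq fun c => by
    change _ = e (algebraMap A (FractionRing A) (algebraMap k A c))
    rw [← IsScalarTower.algebraMap_apply, e.commutes]
  have : IsFractionRing A k⟮X⟯ :=
    (IsLocalization.isLocalization_iff_of_ringEquiv _ e.toRingEquiv).mp inferInstance
  exact nonempty_algEquiv_polynomial_of_isFractionRing A fun u =>
    (hunits u).imp fun _ => And.right

/-- A smooth (normal) rational affine curve over an algebraically closed field `k` of
characteristic zero whose coordinate ring has only constant units is the affine line:
if `A` is a finitely generated integral `k`-domain of Krull dimension `1`, integrally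
closed in its fraction field, with only constant units, and with fraction field
`k`-isomorphic to `k(t)`, then `A` is `k`-isomorphic to the polynomial ring `k[t]`. -/
theorem normal_rational_affine_curve_with_constant_units_is_affine_line
    (k A : Type) [Field k] [IsAlgClosed k] [CharZero k]
    [CommRing A] [IsDomain A] [Algebra k A] [Algebra.FiniteType k A]
    [IsIntegrallyClosed A]
    (hdim : ringKrullDim A = 1)
    (hunits : ∀ u : Aˣ, ∃ c : k, c ≠ 0 ∧ algebraMap k A c = ↑u)
    (hrat : Nonempty (FractionRing A ≃ₐ[k] FractionRing (Polynomial k))) :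
    Nonempty (A ≃ₐ[k] Polynomial k) :=
  normal_rational_affine_curve_with_constant_units_is_affine_line_general k A hunits hrat
end

section
/- Let A be an integral domain that is a finitely generated k-algebra, and let ∂ be a nonzero locally nilpotent k-derivation of A with kernel B = {a ∈ A : ∂(a) = 0}. Then there exists an element r ∈ A that is transcendental over the fraction field Frac(B) of B, such that Frac(A) is generated as a field over Frac(B) by r; that is, Frac(A) = Frac(B)(r) is purely transcendental of transcendence degree 1 over Frac(B). -/
/-!
A nonzero locally nilpotent derivation `∂` has a local slice `a`: `s := ∂a ≠ 0` and `∂s = 0`.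
Since `∂ᵐ(aⁿ) = n.descFactorial m • aⁿ⁻ᵐ sᵐ`, applying `∂ⁿ` to a relation `p(a) = 0` with
coefficients in `ker ∂` and `n = deg p` leaves `lc(p) n! sⁿ = 0`; so `a` is transcendental over
`ker ∂`, hence over its fraction field. Conversely, if `∂ⁿ⁺¹x = 0` then `∂ⁿ` kills
`n! sⁿ x - (∂ⁿx) aⁿ`, so by induction on `n` every element of `A` lies in `Frac(ker ∂)(a)`.
-/

open scoped Nat

theorem exists_iterate_ne_zero_apply_eq_zero {M : Type*} [Zero M] {f : M → M} {y : M}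
    (hy : y ≠ 0) {N : ℕ} (hN : f^[N] y = 0) : ∃ j, f^[j] y ≠ 0 ∧ f (f^[j] y) = 0 := by
  induction N generalizing y with
  | zero => exact absurd hN hy
  | succ N ih =>
    by_cases hfy : f y = 0
    · exact ⟨0, hy, hfy⟩
    · obtain ⟨j, hj⟩ := ih hfy hN
      exact ⟨j + 1, hj⟩

namespace Derivation

variable {R A : Type*} [CommRing R] [CommRing A] [Algebra R A] (D : Derivation R A A)

def kerSubalgebra : Subalgebra R A where
  carrier := {a | D a = 0}
  mul_mem' {a b} ha hb := by simp_all [leibniz]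
  add_mem' {a b} ha hb := by simp_all
  algebraMap_mem' c := D.map_algebraMap c

variable {D}

theorem iterate_eq_coe_pow (n : ℕ) : (⇑D)^[n] = ⇑((D : A →ₗ[R] A) ^ n) := by
  rw [Module.End.coe_pow, coeFn_coe]

theorem iterate_const_mul {b : A} (hb : D b = 0) (n : ℕ) (x : A) :
    D^[n] (b * x) = b * D^[n] x := by
  induction n with
  | zero => rfl
  | succ n ih => simp [Function.iterate_succ_apply', ih, leibniz, hb]

theorem iterate_pow_of_apply_apply_eq_zero {a : A} (hs : D (D a) = 0) (n m : ℕ) :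
    D^[m] (a ^ n) = n.descFactorial m • (a ^ (n - m) * D a ^ m) := by
  induction m with
  | zero => simp
  | succ m ih =>
    rw [Function.iterate_succ_apply', ih, map_nsmul, leibniz, leibniz_pow, leibniz_pow, hs,
      Nat.descFactorial_succ, Nat.sub_sub]
    simp only [smul_eq_mul, nsmul_eq_mul, mul_smul]
    ring

theorem transcendental_kerSubalgebra [IsDomain A] [CharZero A] {a : A} (hs0 : D a ≠ 0)
    (hs : D (D a) = 0) : Transcendental D.kerSubalgebra a := by
  rintro ⟨p, hp0, hpa⟩
  have hterm (i : ℕ) : D^[p.natDegree] ((p.coeff i : A) * a ^ i) =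
      (p.coeff i : A) *
        (i.descFactorial p.natDegree • (a ^ (i - p.natDegree) * D a ^ p.natDegree)) := by
    rw [iterate_const_mul (p.coeff i).2, iterate_pow_of_apply_apply_eq_zero hs]
  have key : D^[p.natDegree] (Polynomial.aeval a p) =
      (p.leadingCoeff : A) * (p.natDegree ! • D a ^ p.natDegree) := by
    rw [Polynomial.aeval_eq_sum_range, Finset.sum_range_succ]
    simp only [Subalgebra.smul_def, smul_eq_mul, iterate_eq_coe_pow, map_add, map_sum]
    simp only [← iterate_eq_coe_pow, hterm]
    rw [Finset.sum_eq_zero fun i hi => by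
      rw [Nat.descFactorial_eq_zero_iff_lt.mpr (Finset.mem_range.mp hi), zero_smul, mul_zero]]
    simp [Nat.descFactorial_self]
  rw [hpa, Function.iterate_fixed (map_zero D)] at key
  have hlc : (p.leadingCoeff : A) ≠ 0 := by simpa using hp0
  exact mul_ne_zero hlc (smul_ne_zero (Nat.factorial_ne_zero _) (pow_ne_zero _ hs0)) key.symm

theorem exists_apply_ne_zero_apply_apply_eq_zero (hD : D ≠ 0) (hnil : ∀ x, ∃ N, D^[N] x = 0) :
    ∃ a, D a ≠ 0 ∧ D (D a) = 0 := by
  obtain ⟨x, hx⟩ : ∃ x, D x ≠ 0 := by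
    by_contra! h
    exact hD (ext fun x => by simpa using h x)
  obtain ⟨N, hN⟩ := hnil (D x)
  obtain ⟨j, hj, hj'⟩ := exists_iterate_ne_zero_apply_eq_zero hx hN
  rw [← Function.iterate_succ_apply, Function.iterate_succ_apply'] at hj hj'
  exact ⟨D^[j] x, hj, hj'⟩

theorem map_mem_of_iterate_eq_zero [IsDomain A] [CharZero A] {L : Type*} [Field L] {f : A →+* L}
    (hf : Function.Injective f) {E : Subfield L} (hker : ∀ b, D b = 0 → f b ∈ E) {a : A}
    (ha : f a ∈ E) (hs0 : D a ≠ 0) (hs : D (D a) = 0) {n : ℕ} {x : A} (hx : D^[n] x = 0) :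
    f x ∈ E := by
  induction n generalizing x with
  | zero => simp [show x = 0 from hx]
  | succ n ih =>
    set d := D^[n] x
    have hd : D d = 0 := by rwa [← Function.iterate_succ_apply' D]
    set c := n ! • D a ^ n
    have hc : D c = 0 := by simp [c, leibniz_pow, hs]
    have hc0 : f c ≠ 0 :=
      (map_ne_zero_iff f hf).mpr (smul_ne_zero (Nat.factorial_ne_zero n) (pow_ne_zero n hs0))
    have hx' : D^[n] (c * x - d * a ^ n) = 0 := by
      rw [iterate_eq_coe_pow, map_sub, ← iterate_eq_coe_pow, iterate_const_mul hc,
        iterate_const_mul hd, iterate_pow_of_apply_apply_eq_zero hs, Nat.descFactorial_self,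
        Nat.sub_self, pow_zero, one_mul, mul_comm, sub_self]
    have hfx : f x = (f (c * x - d * a ^ n) + f d * f a ^ n) / f c := by
      rw [eq_div_iff hc0]
      simp only [map_sub, map_mul, map_pow]
      ring
    rw [hfx]
    exact div_mem (add_mem (ih hx') (mul_mem (hker d hd) (pow_mem ha n))) (hker c hc)

end Derivation

theorem Transcendental.algebraAdjoin_image {R A L : Type*} [CommRing R] [CommRing A] [CommRing L]
    [Algebra R A] [Algebra R L] {f : A →ₐ[R] L} (hf : Function.Injective f) {B : Subalgebra R A}
    {a : A} (h : Transcendental B a) : Transcendental (Algebra.adjoin R (f '' B)) (f a) := by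
  rw [Algebra.adjoin_image, Algebra.adjoin_eq]
  exact h.ringHom_of_comp_eq (B.equivMapOfInjective f hf) f
    (B.equivMapOfInjective f hf).surjective hf rfl

open IntermediateField.algebraAdjoinAdjoin in
theorem Transcendental.intermediateFieldAdjoin_image {K A L : Type*} [Field K] [CommRing A]
    [Field L] [Algebra K A] [Algebra K L] {f : A →ₐ[K] L} (hf : Function.Injective f)
    {B : Subalgebra K A} {a : A} (h : Transcendental B a) :
    Transcendental (IntermediateField.adjoin K (f '' B)) (f a) :=
  (IsFractionRing.isAlgebraic_iff (Algebra.adjoin K (f '' B)) _ L).not.mp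
    (h.algebraAdjoin_image hf)

theorem fraction_field_purely_transcendental_over_kernel_of_lnd_general
    (k A : Type) [Field k] [CharZero k]
    [CommRing A] [IsDomain A] [Algebra k A]
    (der : Derivation k A A) (hne : der ≠ 0)
    (hln : ∀ a : A, ∃ N : ℕ, 0 < N ∧ (⇑der)^[N] a = 0) :
    ∃ r : FractionRing A,
      Transcendental
        (IntermediateField.adjoin k
          (algebraMap A (FractionRing A) '' {a : A | der a = 0})) r ∧
      IntermediateField.adjoin k
        (insert r (algebraMap A (FractionRing A) '' {a : A | der a = 0})) = ⊤ := by
  have : CharZero A := charZero_of_injective_algebraMap (algebraMap k A).injective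
  have hnil (x : A) : ∃ N, der^[N] x = 0 := (hln x).imp fun _ => And.right
  obtain ⟨a, hs0, hs⟩ := der.exists_apply_ne_zero_apply_apply_eq_zero hne hnil
  let f := IsScalarTower.toAlgHom k A (FractionRing A)
  have hf : Function.Injective f := IsFractionRing.injective A (FractionRing A)
  refine ⟨f a, (der.transcendental_kerSubalgebra hs0 hs).intermediateFieldAdjoin_image hf, ?_⟩
  set E := IntermediateField.adjoin k (insert (f a) (f '' {a : A | der a = 0}))
  have hker (b : A) (hb : der b = 0) : f b ∈ E.toSubfield :=
    IntermediateField.subset_adjoin _ _ (Set.mem_insert_of_mem _ ⟨b, hb, rfl⟩)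
  have ha : f a ∈ E.toSubfield := IntermediateField.subset_adjoin _ _ (Set.mem_insert _ _)
  have hA (x : A) : f x ∈ E := by
    obtain ⟨N, hN⟩ := hnil x
    exact der.map_mem_of_iterate_eq_zero (f := f.toRingHom) hf hker ha hs0 hs hN
  rw [eq_top_iff]
  rintro w -
  obtain ⟨x, y, -, rfl⟩ := IsFractionRing.div_surjective (A := A) w
  exact div_mem (hA x) (hA y)

/-- The case of the additive group `G_a` in Theorem 1 of the paper: if `∂` is a nonzero
locally nilpotent `k`-derivation of a finitely generated integral `k`-domain `A` with
kernel `B`, then `Frac A` is purely transcendental of transcendence degree 1 over `Frac B`: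
there is `r ∈ Frac A` transcendental over `Frac B` with `Frac A = (Frac B)(r)`.
Here `Frac B` is realized inside `Frac A` as the subfield generated over `k` by the image
of the kernel of `∂`. -/
theorem fraction_field_purely_transcendental_over_kernel_of_lnd
    (k A : Type) [Field k] [IsAlgClosed k] [CharZero k]
    [CommRing A] [IsDomain A] [Algebra k A] [Algebra.FiniteType k A]
    (der : Derivation k A A) (hne : der ≠ 0)
    (hln : ∀ a : A, ∃ N : ℕ, 0 < N ∧ (⇑der)^[N] a = 0) :
    ∃ r : FractionRing A,
      Transcendental
        (IntermediateField.adjoin k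
          (algebraMap A (FractionRing A) '' {a : A | der a = 0})) r ∧
      IntermediateField.adjoin k
        (insert r (algebraMap A (FractionRing A) '' {a : A | der a = 0})) = ⊤ :=
  fraction_field_purely_transcendental_over_kernel_of_lnd_general k A der hne hln
end

section
/- Let ℓ ≥ 2 be an integer, Q the polynomial ring over k in the 2ℓ+1 variables x_1, …, x_ℓ, x_0, x_{−ℓ}, …, x_{−1}, h = x_0^2 + x_{−1}x_1 + ⋯ + x_{−ℓ}x_ℓ, and B = Q/(h), with x̄_i denoting the image of x_i in B. For j in J' = {2, …, ℓ, 0, −ℓ, …, −2}, let ∂_j be the k-derivation of B induced by the derivation D_j of Q (determined by D_j(x_j) = x_1; D_j(x_{−1}) = −x_{−j} for j ≠ 0 and D_0(x_{−1}) = −2x_0; D_j(x_i) = 0 otherwise), which descends to B since D_j(h) = 0. Then the family {∂_j : j ∈ J'} of 2ℓ−1 derivations of B is linearly independent over B (Σ_{j∈J'} b_j ∂_j = 0 with b_j ∈ B forces all b_j = 0), and the common kernel {b ∈ B : ∂_j(b) = 0 for all j ∈ J'} equals the k-subalgebra of B generated by x̄_1. -/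
open MvPolynomial

set_option synthInstance.maxHeartbeats 1000000

/-- The quadratic form `h = x₀² + x₋₁x₁ + x₋₂x₂ + ⋯ + x₋ₗxₗ` in the `2ℓ + 1` variables
`x₁, …, x_ℓ, x₀, x₋ℓ, …, x₋₁`; the variable `x₀` is indexed by `none`, the variable
`xᵢ₊₁` by `some (Sum.inl i)` and the variable `x₋₍ᵢ₊₁₎` by `some (Sum.inr i)`. -/
noncomputable def quadH (k : Type) [CommRing k] (l : ℕ) :
    MvPolynomial (Option (Fin l ⊕ Fin l)) k :=
  X none ^ 2 + ∑ i : Fin l, X (some (Sum.inl i)) * X (some (Sum.inr i))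

/-- For an index `j`, the unique `k`-derivation `D_j` of
`Q = k[x₁, …, x_ℓ, x₀, x₋ℓ, …, x₋₁]` with `D_j(x_j) = x₁`, with `D_j(x₋₁) = -x₋ⱼ` if
`j ≠ 0` and `D₀(x₋₁) = -2x₀`, and with `D_j(xᵢ) = 0` for every other variable. -/
noncomputable def quadDerQ (k : Type) [CommRing k] (l : ℕ) (hl : 0 < l)
    (j : Option (Fin l ⊕ Fin l)) :
    Derivation k (MvPolynomial (Option (Fin l ⊕ Fin l)) k)
      (MvPolynomial (Option (Fin l ⊕ Fin l)) k) :=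
  MvPolynomial.mkDerivation k fun i =>
    if i = j then X (some (Sum.inl (⟨0, hl⟩ : Fin l)))
    else if i = some (Sum.inr (⟨0, hl⟩ : Fin l)) then
      if j = none then -(2 : MvPolynomial (Option (Fin l ⊕ Fin l)) k) * X none
      else -X (Option.map Sum.swap j)
    else 0

/-- The index set `J' = {2, 3, …, ℓ, 0, -ℓ, …, -3, -2}`: all `2ℓ - 1` indices of
variables other than `x₁` and `x₋₁`. -/
abbrev quadIdxQ (l : ℕ) (hl : 0 < l) : Type :=
  {j : Option (Fin l ⊕ Fin l) //
    j ≠ some (Sum.inl ⟨0, hl⟩) ∧ j ≠ some (Sum.inr ⟨0, hl⟩)}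

/-
Applied to `x̄ⱼ₀`, a relation `∑ bⱼ ∂ⱼ = 0` gives `bⱼ₀ x̄₁ = 0`, and `x̄₁` is a nonzerodivisor of
`B` because `x₁` is prime in `Q` and does not divide `h`.

For the kernel, write `h = x₁x₋₁ + r` with `r` free of `x₋₁`. Eliminating `x₋₁` shows that for
every `p` some `x₁ᴺ p` is congruent modulo `h` to a polynomial `c` free of `x₋₁`, and on such
polynomials `Dⱼ` acts as `x₁ ∂/∂xⱼ`. If all `∂ⱼ` kill `p̄` they kill `c̄`, so `x₁ ∂c/∂xⱼ ∈ (h)`;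
since every nonzero multiple of `h` involves `x₋₁`, this forces `∂c/∂xⱼ = 0`, hence
`c ∈ k[x₁]` in characteristic zero. Finally `x̄₁ᴺ p̄ ∈ k[x̄₁]` implies `p̄ ∈ k[x̄₁]`: the origin
lies on the quadric, so evaluating there kills the constant term and `x̄₁` can be cancelled.
-/

open scoped nonZeroDivisors

namespace MvPolynomial

variable {R σ : Type*}

section CommSemiring

variable [CommSemiring R]

theorem notMem_vars_of_pderiv_eq_zero [NoZeroDivisors R] [CharZero R] {i : σ}
    {f : MvPolynomial σ R} (h : pderiv i f = 0) : i ∉ f.vars := by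
  classical
  intro hi
  obtain ⟨m, hm, hmi⟩ := (mem_vars_iff_mem_support i).mp hi
  have hle : Finsupp.single i 1 ≤ m :=
    Finsupp.single_le_iff.mpr (Nat.one_le_iff_ne_zero.mpr (Finsupp.mem_support_iff.mp hmi))
  have hcoeff := coeff_pderiv (i := i) f (m - Finsupp.single i 1)
  rw [h, coeff_zero, tsub_add_cancel_of_le hle] at hcoeff
  exact mem_support_iff.mp hm
    ((mul_eq_zero.mp hcoeff.symm).resolve_right (Nat.cast_add_one_ne_zero _))

theorem pderiv_mem_supported {s : Set σ} {f : MvPolynomial σ R} (hf : f ∈ supported R s)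
    (i : σ) : pderiv i f ∈ supported R s := by
  by_cases hi : i ∈ s
  · rw [supported_eq_range_rename] at hf ⊢
    obtain ⟨g, rfl⟩ := (AlgHom.mem_range _).mp hf
    exact (AlgHom.mem_range _).mpr
      ⟨_, (pderiv_rename (R := R) (Subtype.val_injective (p := (· ∈ s))) ⟨i, hi⟩ g).symm⟩
  · rw [pderiv_eq_zero_of_notMem_vars fun hv => hi (mem_supported.mp hf hv)]
    exact zero_mem _

end CommSemiring

section LinearInVariable

variable [CommRing R] {v : σ} {a b : MvPolynomial σ R}

theorem exists_pow_mul_eq_mul_add_mem_supported (ha : a ∈ supported R {v}ᶜ)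
    (hb : b ∈ supported R {v}ᶜ) (f : MvPolynomial σ R) :
    ∃ (N : ℕ) (q c : MvPolynomial σ R),
      c ∈ supported R {v}ᶜ ∧ a ^ N * f = (a * X v + b) * q + c := by
  induction f using MvPolynomial.induction_on with
  | C r =>
    have hC : C r ∈ supported R {v}ᶜ := Subalgebra.algebraMap_mem _ r
    exact ⟨0, 0, C r, hC, by simp⟩
  | add f g hf hg =>
    obtain ⟨N, q, c, hc, hfq⟩ := hf
    obtain ⟨M, q', c', hc', hgq⟩ := hg
    refine ⟨N + M, a ^ M * q + a ^ N * q', a ^ M * c + a ^ N * c',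
      add_mem (mul_mem (pow_mem ha M) hc) (mul_mem (pow_mem ha N) hc'), ?_⟩
    linear_combination a ^ M * hfq + a ^ N * hgq
  | mul_X f i hf =>
    obtain ⟨N, q, c, hc, hfq⟩ := hf
    by_cases hi : i = v
    · subst hi
      -- `a * X v ≡ -b` modulo `a * X v + b`
      exact ⟨N + 1, q * a * X i + c, -(c * b), neg_mem (mul_mem hc hb),
        by linear_combination (a * X i) * hfq⟩
    · have hXi : X i ∈ supported R {v}ᶜ := Algebra.subset_adjoin (Set.mem_image_of_mem X hi)
      exact ⟨N, q * X i, c * X i, mul_mem hc hXi, by linear_combination X i * hfq⟩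

theorem eq_zero_of_mem_supported_of_mem_span [NoZeroDivisors R]
    (ha : a ∈ supported R {v}ᶜ) (hb : b ∈ supported R {v}ᶜ) (ha0 : a ≠ 0)
    {c : MvPolynomial σ R} (hc : c ∈ supported R {v}ᶜ)
    (hch : c ∈ Ideal.span {a * X v + b}) : c = 0 := by
  have notMem_vars {f : MvPolynomial σ R} (hf : f ∈ supported R {v}ᶜ) : v ∉ f.vars :=
    fun hv => mem_supported.mp hf hv rfl
  have hv : v ∈ (a * X v + b).vars := by
    by_contra hnot
    apply ha0
    simpa [pderiv_eq_zero_of_notMem_vars (notMem_vars ha),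
      pderiv_eq_zero_of_notMem_vars (notMem_vars hb)] using
      pderiv_eq_zero_of_notMem_vars (i := v) hnot
  obtain ⟨u, rfl⟩ := Ideal.mem_span_singleton'.mp hch
  by_contra hne
  have hdeg := notMem_vars hc
  rw [mem_vars_iff_degreeOf_ne_zero] at hv hdeg
  rw [degreeOf_mul_eq (left_ne_zero_of_mul hne) (right_ne_zero_of_mul hne)] at hdeg
  omega

end LinearInVariable

end MvPolynomial

theorem Prime.mk_mem_nonZeroDivisors_of_not_dvd {R : Type*} [CommRing R] [IsDomain R]
    {p h : R} (hp : Prime p) (hph : ¬ p ∣ h) :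
    Ideal.Quotient.mk (Ideal.span {h}) p ∈ (R ⧸ Ideal.span {h})⁰ := by
  rw [mem_nonZeroDivisors_iff_right]
  intro x hx
  obtain ⟨a, rfl⟩ := Ideal.Quotient.mk_surjective x
  rw [← map_mul, Ideal.Quotient.eq_zero_iff_mem, Ideal.mem_span_singleton] at hx
  rw [Ideal.Quotient.eq_zero_iff_mem, Ideal.mem_span_singleton]
  obtain ⟨u, hu⟩ := hx
  obtain ⟨w, rfl⟩ := (hp.dvd_or_dvd (⟨a, by rw [← hu, mul_comm]⟩ : p ∣ h * u)).resolve_left hph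
  exact ⟨w, mul_right_cancel₀ hp.ne_zero (by rw [hu]; ring)⟩

namespace Algebra

variable {R B : Type*} [CommRing R] [CommRing B] [Algebra R B] {t : B}

theorem mem_adjoin_singleton_of_mul_mem (ht : t ∈ B⁰) (ε : B →ₐ[R] R) (hεt : ε t = 0) {d : B}
    (hd : t * d ∈ adjoin R {t}) : d ∈ adjoin R {t} := by
  rw [adjoin_singleton_eq_range_aeval] at hd ⊢
  obtain ⟨f, hf⟩ := (AlgHom.mem_range _).mp hd
  have hsplit : Polynomial.aeval t f
      = t * Polynomial.aeval t f.divX + algebraMap R B (f.coeff 0) := by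
    conv_lhs => rw [← Polynomial.X_mul_divX_add f]
    rw [map_add, map_mul, Polynomial.aeval_X, Polynomial.aeval_C]
  have hf0 : f.coeff 0 = 0 := by
    simpa [hεt] using congrArg ε (hsplit.symm.trans hf)
  rw [hf0, map_zero, add_zero] at hsplit
  refine (AlgHom.mem_range _).mpr ⟨f.divX, ?_⟩
  have hcancel : t * (d - Polynomial.aeval t f.divX) = 0 := by
    rw [mul_sub, ← hf, hsplit, sub_self]
  exact (sub_eq_zero.mp ((mul_left_mem_nonZeroDivisors_eq_zero_iff ht).mp hcancel)).symm

theorem mem_adjoin_singleton_of_pow_mul_mem (ht : t ∈ B⁰) (ε : B →ₐ[R] R) (hεt : ε t = 0) {d : B}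
    (N : ℕ) (hd : t ^ N * d ∈ adjoin R {t}) : d ∈ adjoin R {t} := by
  induction N generalizing d with
  | zero => simpa using hd
  | succ N ih =>
    exact mem_adjoin_singleton_of_mul_mem ht ε hεt (ih (by rwa [← mul_assoc, ← pow_succ]))

end Algebra

section OddQuadric

variable {k : Type} [Field k] {l : ℕ} (hl : 0 < l)

local notation "Q" => MvPolynomial (Option (Fin l ⊕ Fin l)) k
local notation "π" => Ideal.Quotient.mk (Ideal.span {quadH k l})
local notation "B" => Q ⧸ Ideal.span {quadH k l}
local notation "x₁" => (some (Sum.inl (Fin.mk 0 hl)) : Option (Fin l ⊕ Fin l))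
local notation "x₋₁" => (some (Sum.inr (Fin.mk 0 hl)) : Option (Fin l ⊕ Fin l))

theorem quadH_eq_X_mul_X_add : ∃ b ∈ supported k {x₋₁}ᶜ, quadH k l = X x₁ * X x₋₁ + b := by
  have hX {i} (hi : i ≠ x₋₁) : (X i : Q) ∈ supported k {x₋₁}ᶜ := X_mem_supported.mpr hi
  refine ⟨X none ^ 2 +
      ∑ i ∈ Finset.univ.erase ⟨0, hl⟩, X (some (Sum.inl i)) * X (some (Sum.inr i)),
    add_mem (pow_mem (hX (by simp)) 2)
      (sum_mem fun i hi => mul_mem (hX (by simp)) (hX (by simpa using Finset.ne_of_mem_erase hi))),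
    ?_⟩
  rw [quadH, ← Finset.add_sum_erase _ _ (Finset.mem_univ ⟨0, hl⟩)]
  ring

theorem X_one_not_dvd_quadH : ¬ (X x₁ : Q) ∣ quadH k l := by
  rintro ⟨u, hu⟩
  have heval :=
    congrArg (aeval fun i : Option (Fin l ⊕ Fin l) => if i = none then (1 : k) else 0) hu
  simp [quadH] at heval

theorem mk_X_one_mem_nonZeroDivisors : π (X x₁) ∈ B⁰ :=
  X_prime.mk_mem_nonZeroDivisors_of_not_dvd (X_one_not_dvd_quadH hl)

variable (k l) in
noncomputable def quadEvalOrigin : B →ₐ[k] k :=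
  Ideal.Quotient.liftₐ _ (aeval fun _ => 0) fun a ha => by
    obtain ⟨u, rfl⟩ := Ideal.mem_span_singleton'.mp ha
    simp [quadH]

theorem quadEvalOrigin_mk_X (i : Option (Fin l ⊕ Fin l)) :
    quadEvalOrigin k l (π (X i)) = 0 := by
  simp [quadEvalOrigin]

theorem quadDerQ_X_of_ne (j : Option (Fin l ⊕ Fin l)) {i : Option (Fin l ⊕ Fin l)}
    (hi : i ≠ x₋₁) :
    quadDerQ k l hl j (X i) = if i = j then X x₁ else 0 := by
  simp [quadDerQ, mkDerivation_X, hi]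

theorem quadDerQ_eq_X_mul_pderiv (j : Option (Fin l ⊕ Fin l)) {f : Q}
    (hf : f ∈ supported k {x₋₁}ᶜ) :
    quadDerQ k l hl j f = X x₁ * pderiv j f := by
  classical
  refine (derivation_eqOn_supported (D₂ := (X x₁ : Q) • pderiv j) (fun i hi => ?_) hf).trans
    (by rw [Derivation.smul_apply, smul_eq_mul])
  simp [quadDerQ_X_of_ne hl j hi, pderiv_X, Pi.single_apply, eq_comm]

def IsInducedByQuadDerQ (der : quadIdxQ l hl → Derivation k B B) : Prop :=
  ∀ (j : quadIdxQ l hl) (p : Q), der j (π p) = π (quadDerQ k l hl j.1 p)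

theorem der_mk_X_of_ne {der : quadIdxQ l hl → Derivation k B B}
    (hder : IsInducedByQuadDerQ hl der)
    (j : quadIdxQ l hl) {i : Option (Fin l ⊕ Fin l)} (hi : i ≠ x₋₁) :
    der j (π (X i)) = if i = j.1 then π (X x₁) else 0 := by
  rw [hder j, quadDerQ_X_of_ne hl _ hi, apply_ite π, map_zero]

theorem eq_zero_of_sum_smul_der_eq_zero {der : quadIdxQ l hl → Derivation k B B}
    (hder : IsInducedByQuadDerQ hl der)
    (b : quadIdxQ l hl → B) (hsum : ∑ j, b j • der j = 0) (j₀ : quadIdxQ l hl) :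
    b j₀ = 0 := by
  have h := congrArg (fun D : Derivation k B B => D (π (X j₀.1))) hsum
  simp only [← Derivation.coeFnAddMonoidHom_apply, map_sum, Finset.sum_apply] at h
  simp only [Derivation.coeFnAddMonoidHom_apply, Derivation.smul_apply, smul_eq_mul,
    der_mk_X_of_ne hl hder _ j₀.2.2, Subtype.val_inj, mul_ite, mul_zero, Finset.sum_ite_eq,
    Finset.mem_univ, if_true, Derivation.zero_apply] at h
  exact (mul_right_mem_nonZeroDivisors_eq_zero_iff (mk_X_one_mem_nonZeroDivisors hl)).mp h

theorem der_eq_zero_of_mem_adjoin {der : quadIdxQ l hl → Derivation k B B}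
    (hder : IsInducedByQuadDerQ hl der) {b : B}
    (hb : b ∈ Algebra.adjoin k {π (X x₁)}) (j : quadIdxQ l hl) : der j b = 0 := by
  refine Derivation.eqOn_adjoin (D2 := 0) (Set.eqOn_singleton.2 ?_) hb
  rw [der_mk_X_of_ne hl hder j (by simp), if_neg (Ne.symm j.2.1), Derivation.zero_apply]

theorem mem_adjoin_of_forall_der_eq_zero [CharZero k] {der : quadIdxQ l hl → Derivation k B B}
    (hder : IsInducedByQuadDerQ hl der) {b : B} (hb : ∀ j, der j b = 0) :
    b ∈ Algebra.adjoin k {π (X x₁)} := by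
  obtain ⟨p, rfl⟩ := Ideal.Quotient.mk_surjective b
  obtain ⟨r, hr, hquad⟩ := quadH_eq_X_mul_X_add (k := k) hl
  have hx₁ : (X x₁ : Q) ∈ supported k {x₋₁}ᶜ := X_mem_supported.mpr (by simp)
  obtain ⟨N, q, c, hc, hpc⟩ := exists_pow_mul_eq_mul_add_mem_supported hx₁ hr p
  have hmk : π (X x₁) ^ N * π p = π c := by
    rw [← map_pow, ← map_mul, hpc, ← hquad, map_add, map_mul,
      Ideal.Quotient.eq_zero_iff_mem.mpr (Ideal.mem_span_singleton_self _), zero_mul, zero_add]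
  have hderc (j : quadIdxQ l hl) : der j (π c) = 0 := by
    rw [← hmk, Derivation.leibniz, Derivation.leibniz_pow, hb,
      der_eq_zero_of_mem_adjoin hl hder (Algebra.self_mem_adjoin_singleton k _)]
    simp
  have hpderiv (j : quadIdxQ l hl) : pderiv j.1 c = 0 := by
    have h := hderc j
    rw [hder j, quadDerQ_eq_X_mul_pderiv hl _ hc, map_mul,
      mul_left_mem_nonZeroDivisors_eq_zero_iff (mk_X_one_mem_nonZeroDivisors hl),
      Ideal.Quotient.eq_zero_iff_mem, hquad] at h
    exact eq_zero_of_mem_supported_of_mem_span hx₁ hr (X_ne_zero _) (pderiv_mem_supported hc _) h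
  have hcx : c ∈ Algebra.adjoin k {X x₁} := by
    rw [← Set.image_singleton, ← supported_eq_adjoin_X, mem_supported]
    intro w hw
    by_contra hw₁
    exact notMem_vars_of_pderiv_eq_zero
      (hpderiv ⟨w, hw₁, fun hwv => mem_supported.mp hc hw hwv⟩) hw
  have hmkc : π c ∈ Algebra.adjoin k {π (X x₁)} := by
    have := (Subalgebra.mem_map (f := Ideal.Quotient.mkₐ k (Ideal.span {quadH k l}))).mpr
      ⟨c, hcx, rfl⟩
    rwa [← Algebra.adjoin_image, Set.image_singleton, Ideal.Quotient.mkₐ_eq_mk] at this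
  exact Algebra.mem_adjoin_singleton_of_pow_mul_mem (mk_X_one_mem_nonZeroDivisors hl)
    (quadEvalOrigin k l) (quadEvalOrigin_mk_X _) N (hmk ▸ hmkc)

end OddQuadric

/-- For `ℓ ≥ 2`, let `∂_j` (`j ∈ J'`) be the `k`-derivations of `B = Q/(h)` induced by
the derivations `D_j` of `Q = k[x₁, …, x_ℓ, x₀, x₋ℓ, …, x₋₁]` (which descend since
`D_j(h) = 0`).  Then the family `{∂_j : j ∈ J'}` of `2ℓ - 1` derivations of `B` is
linearly independent over `B`, and its common kernel is exactly the `k`-subalgebra of `B`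
generated by `x̄₁`, the image of the variable `x₁`. -/
theorem odd_quadric_induced_derivations_linIndep_and_kernel
    (k : Type) [Field k] [CharZero k] (l : ℕ) (hl : 2 ≤ l) :
    ∀ der : quadIdxQ l (by omega) →
        Derivation k (MvPolynomial (Option (Fin l ⊕ Fin l)) k ⧸ Ideal.span {quadH k l})
          (MvPolynomial (Option (Fin l ⊕ Fin l)) k ⧸ Ideal.span {quadH k l}),
      (∀ (j : quadIdxQ l (by omega)) (p : MvPolynomial (Option (Fin l ⊕ Fin l)) k),
        der j (Ideal.Quotient.mk (Ideal.span {quadH k l}) p)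
          = Ideal.Quotient.mk (Ideal.span {quadH k l}) (quadDerQ k l (by omega) j.1 p)) →
      (∀ b : quadIdxQ l (by omega) →
          (MvPolynomial (Option (Fin l ⊕ Fin l)) k ⧸ Ideal.span {quadH k l}),
        (∑ j, b j • der j) = 0 → ∀ j, b j = 0) ∧
      {b : MvPolynomial (Option (Fin l ⊕ Fin l)) k ⧸ Ideal.span {quadH k l} |
          ∀ j : quadIdxQ l (by omega), der j b = 0}
        = ↑(Algebra.adjoin k
            {Ideal.Quotient.mk (Ideal.span {quadH k l})
              (X (some (Sum.inl ⟨0, by omega⟩)))}) := by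
  intro der hder
  have hl₀ : 0 < l := by omega
  exact ⟨eq_zero_of_sum_smul_der_eq_zero hl₀ hder,
    Set.ext fun b => ⟨mem_adjoin_of_forall_der_eq_zero hl₀ hder,
      fun hb j => der_eq_zero_of_mem_adjoin hl₀ hder hb j⟩⟩
end
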